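/- arXiv:math/0511067 — 3 statements merged into one kernel-verified Lean document; each statement's English description precedes it below -/
import Mathlib

section
/- (Weber formula implies the Euler equations.) Let u : ℝⁿ × ℝ → ℝⁿ be a smooth divergence-free vector field, X a smooth flow map of u whose spatial inverse A(·,t) is smooth jointly in x and t, u₀ : ℝⁿ → ℝⁿ smooth, and suppose there is a smooth scalar p : ℝⁿ × ℝ → ℝ such that u = (∇A)ᵀ (u₀∘A) − ∇p. Then there exists a smooth scalar function P : ℝⁿ × ℝ → ℝ such that u satisfies the incompressible Euler equations ∂ₜu + (u·∇)u + ∇P = 0. -/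
/-- Partial derivative of `f` at `x` in the `j`-th coordinate direction. -/
noncomputable def pd {d : ℕ} {E : Type*} [NormedAddCommGroup E] [NormedSpace ℝ E]
    (f : (Fin d → ℝ) → E) (x : Fin d → ℝ) (j : Fin d) : E :=
  fderiv ℝ f x (Pi.single j 1)

section Helpers

variable {d : ℕ}

local notation "E'" => (Fin d → ℝ)
local notation "Z" => ((Fin d → ℝ) × ℝ)

lemma slice_hasFDerivAt (t : ℝ) (x : E') :
    HasFDerivAt (fun y : E' => ((y, t) : Z)) (ContinuousLinearMap.inl ℝ E' ℝ) x := by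
  exact (hasFDerivAt_id x).prodMk (hasFDerivAt_const t x)

lemma pd_slice (F : Z → ℝ) (x : E') (t : ℝ) (hF : DifferentiableAt ℝ F (x, t)) (i : Fin d) :
    pd (fun y => F (y, t)) x i = fderiv ℝ F (x, t) (Pi.single i 1, 0) := by
  have h := hF.hasFDerivAt.comp x (slice_hasFDerivAt t x)
  have : (fun y => F (y, t)) = F ∘ fun y : E' => (y, t) := rfl
  rw [pd, this, h.fderiv]
  rfl

lemma deriv_slice (F : Z → ℝ) (x : E') (t : ℝ) (hF : DifferentiableAt ℝ F (x, t)) :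
    deriv (fun s => F (x, s)) t = fderiv ℝ F (x, t) ((0 : E'), 1) := by
  have hline : HasDerivAt (fun s : ℝ => ((x, s) : Z)) ((0 : E'), 1) t :=
    (hasDerivAt_const t x).prodMk (hasDerivAt_id t)
  have h := hF.hasFDerivAt.comp_hasDerivAt t hline
  exact h.deriv

lemma fderiv_decomp (F : Z → ℝ) (z : Z) (v : E') (s : ℝ) :
    fderiv ℝ F z (v, s)
      = (∑ k, v k * fderiv ℝ F z (Pi.single k 1, 0)) + s * fderiv ℝ F z ((0 : E'), 1) := by
  have hv : ((v, s) : Z) = (∑ k, v k • ((Pi.single k 1 : E'), (0:ℝ))) + s • (((0:E'), 1) : Z) := by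
    ext j
    · simp [Prod.fst_sum, Finset.sum_apply, Pi.single_apply, eq_comm]
    · simp [Prod.snd_sum]
  rw [hv, map_add, map_sum, map_smul]
  simp only [map_smul, smul_eq_mul]

lemma smooth_dapply {F : Z → ℝ} (hF : ContDiff ℝ (⊤ : ℕ∞) F) (v : Z) :
    ContDiff ℝ (⊤ : ℕ∞) (fun z => fderiv ℝ F z v) :=
  (hF.fderiv_right (by simp)).clm_apply contDiff_const

lemma clairaut {F : Z → ℝ} (hF : ContDiff ℝ (⊤ : ℕ∞) F) (z v w : Z) :
    fderiv ℝ (fun y => fderiv ℝ F y v) z w = fderiv ℝ (fun y => fderiv ℝ F y w) z v := by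
  have hf' : ∀ y, HasFDerivAt F (fderiv ℝ F y) y := fun y =>
    (hF.differentiable (by simp) y).hasFDerivAt
  have hf'' : HasFDerivAt (fderiv ℝ F) (fderiv ℝ (fderiv ℝ F) z) z :=
    (((hF.fderiv_right (m := (⊤ : ℕ∞)) (by simp)).differentiable (by simp)) z).hasFDerivAt
  have sym := second_derivative_symmetric hf' hf'' v w
  have e : ∀ a : Z, fderiv ℝ (fun y => fderiv ℝ F y a) z
      = (ContinuousLinearMap.apply ℝ ℝ a).comp (fderiv ℝ (fderiv ℝ F) z) := by
    intro a
    exact ((ContinuousLinearMap.apply ℝ ℝ a).hasFDerivAt.comp z hf'').fderiv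
  rw [e v, e w]
  simpa using sym.symm

lemma transport {u X : E' → ℝ → E'} (hX : ContDiff ℝ (⊤ : ℕ∞) (fun z : Z => X z.1 z.2))
    (hflow : ∀ a t, deriv (fun s => X a s) t = u (X a t) t)
    (hsurj : ∀ x t, ∃ a, X a t = x)
    {g : Z → ℝ} (hg : ContDiff ℝ (⊤ : ℕ∞) g) (hgc : ∀ a t, g (X a t, t) = g (a, 0)) :
    ∀ x t, fderiv ℝ g (x, t) (u x t, 1) = 0 := by
  intro x t
  obtain ⟨a, ha⟩ := hsurj x t
  have hXd : DifferentiableAt ℝ (fun s => X a s) t := by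
    have : (fun s => X a s) = (fun z : Z => X z.1 z.2) ∘ (fun s : ℝ => ((a, s) : Z)) := rfl
    rw [this]
    exact ((hX.differentiable (by simp)).comp
      ((differentiable_const a).prodMk differentiable_id)) t
  have hXD : HasDerivAt (fun s => X a s) (u (X a t) t) t := by
    have h := hXd.hasDerivAt
    rwa [hflow a t] at h
  have hcurve : HasDerivAt (fun s => ((X a s, s) : Z)) ((u (X a t) t, 1) : Z) t :=
    hXD.prodMk (hasDerivAt_id t)
  have hcomp : HasDerivAt (g ∘ fun s => ((X a s, s) : Z))
      (fderiv ℝ g (X a t, t) ((u (X a t) t, 1) : Z)) t :=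
    HasFDerivAt.comp_hasDerivAt t ((hg.differentiable (by simp)) _).hasFDerivAt hcurve
  have hfun : (g ∘ fun s => ((X a s, s) : Z)) = fun _ => g (a, 0) :=
    funext fun s => hgc a s
  rw [hfun] at hcomp
  have h0 := hcomp.unique (hasDerivAt_const t (g (a, 0)))
  rw [ha] at h0
  exact h0

lemma fderiv_sum_mul {f g : Fin d → Z → ℝ} (hf : ∀ j, ContDiff ℝ (⊤ : ℕ∞) (f j))
    (hg : ∀ j, ContDiff ℝ (⊤ : ℕ∞) (g j)) (z v : Z) :
    fderiv ℝ (fun y => ∑ j, f j y * g j y) z v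
      = ∑ j, (fderiv ℝ (f j) z v * g j z + f j z * fderiv ℝ (g j) z v) := by
  rw [fderiv_fun_sum (fun j _ => (((hf j).mul (hg j)).differentiable (by simp)) z)]
  rw [ContinuousLinearMap.sum_apply]
  refine Finset.sum_congr rfl fun j _ => ?_
  rw [fderiv_fun_mul (((hf j).differentiable (by simp)) z) (((hg j).differentiable (by simp)) z)]
  simp [smul_eq_mul]
  ring

lemma transport_grad {u X : E' → ℝ → E'} (hu : ContDiff ℝ (⊤ : ℕ∞) (fun z : Z => u z.1 z.2))
    (hX : ContDiff ℝ (⊤ : ℕ∞) (fun z : Z => X z.1 z.2))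
    (hflow : ∀ a t, deriv (fun s => X a s) t = u (X a t) t)
    (hsurj : ∀ x t, ∃ a, X a t = x)
    {g : Z → ℝ} (hg : ContDiff ℝ (⊤ : ℕ∞) g) (hgc : ∀ a t, g (X a t, t) = g (a, 0)) (i : Fin d) :
    ∀ z : Z, fderiv ℝ (fun y => fderiv ℝ g y (Pi.single i 1, 0)) z (u z.1 z.2, 1)
      = - ∑ k, fderiv ℝ (fun y : Z => u y.1 y.2 k) z (Pi.single i 1, 0)
            * fderiv ℝ g z (Pi.single k 1, 0) := by
  intro z
  have hU : ∀ k, ContDiff ℝ (⊤ : ℕ∞) (fun y : Z => u y.1 y.2 k) := fun k => (contDiff_pi.1 hu) k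
  set φ : Z → ℝ := fun y =>
    (∑ k, u y.1 y.2 k * fderiv ℝ g y (Pi.single k 1, 0)) + fderiv ℝ g y ((0 : E'), 1) with hφ
  have hφ0 : φ = fun _ => 0 := by
    funext y
    have h := transport hX hflow hsurj hg hgc y.1 y.2
    rw [fderiv_decomp] at h
    simpa [hφ] using h
  have hder0 : fderiv ℝ φ z (Pi.single i 1, 0) = 0 := by
    rw [hφ0, fderiv_fun_const]; simp
  have hsum : ContDiff ℝ (⊤ : ℕ∞) (fun y : Z => ∑ k, u y.1 y.2 k * fderiv ℝ g y (Pi.single k 1, 0)) :=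
    ContDiff.sum fun k _ => (hU k).mul (smooth_dapply hg _)
  have hexp : fderiv ℝ φ z (Pi.single i 1, 0)
      = (∑ k, (fderiv ℝ (fun y : Z => u y.1 y.2 k) z (Pi.single i 1, 0)
            * fderiv ℝ g z (Pi.single k 1, 0)
          + u z.1 z.2 k * fderiv ℝ (fun y => fderiv ℝ g y (Pi.single k 1, 0)) z (Pi.single i 1, 0)))
        + fderiv ℝ (fun y => fderiv ℝ g y ((0 : E'), 1)) z (Pi.single i 1, 0) := by
    rw [hφ]
    rw [fderiv_fun_add ((hsum.differentiable (by simp)) z) (((smooth_dapply hg _).differentiable (by simp)) z)]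
    rw [ContinuousLinearMap.add_apply]
    rw [fderiv_sum_mul hU (fun k => smooth_dapply hg _)]
  have hclair1 : ∀ k, fderiv ℝ (fun y => fderiv ℝ g y (Pi.single k 1, 0)) z (Pi.single i 1, 0)
      = fderiv ℝ (fun y => fderiv ℝ g y (Pi.single i 1, 0)) z (Pi.single k 1, 0) :=
    fun k => clairaut hg z _ _
  have hclair2 : fderiv ℝ (fun y => fderiv ℝ g y ((0 : E'), 1)) z (Pi.single i 1, 0)
      = fderiv ℝ (fun y => fderiv ℝ g y (Pi.single i 1, 0)) z ((0 : E'), 1) :=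
    clairaut hg z _ _
  rw [hexp] at hder0
  simp only [hclair1, hclair2] at hder0
  rw [Finset.sum_add_distrib] at hder0
  rw [fderiv_decomp]
  linarith [hder0]

end Helpers

/-- Weber formula implies the Euler equations: if `u` is divergence free, `A` is
the inverse of the flow map `X` of `u`, and `u = (∇A)ᵀ (u₀∘A) − ∇p` for some
smooth scalar `p`, then there is a smooth scalar `P` with
`∂ₜu + (u·∇)u + ∇P = 0`. -/
theorem weber_formula_implies_euler {d : ℕ}
    (u X A : (Fin d → ℝ) → ℝ → Fin d → ℝ)
    (u₀ : (Fin d → ℝ) → Fin d → ℝ)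
    (p : (Fin d → ℝ) → ℝ → ℝ)
    (hu : ContDiff ℝ (⊤ : ℕ∞) (fun z : (Fin d → ℝ) × ℝ => u z.1 z.2))
    (hdiv : ∀ x t, ∑ i, pd (fun y => u y t i) x i = 0)
    (hX : ContDiff ℝ (⊤ : ℕ∞) (fun z : (Fin d → ℝ) × ℝ => X z.1 z.2))
    (hA : ContDiff ℝ (⊤ : ℕ∞) (fun z : (Fin d → ℝ) × ℝ => A z.1 z.2))
    (hflow : ∀ a t, deriv (fun s => X a s) t = u (X a t) t)
    (hinit : ∀ a, X a 0 = a)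
    (hAX : ∀ a t, A (X a t) t = a)
    (hXA : ∀ x t, X (A x t) t = x)
    (hu₀ : ContDiff ℝ (⊤ : ℕ∞) u₀)
    (hp : ContDiff ℝ (⊤ : ℕ∞) (fun z : (Fin d → ℝ) × ℝ => p z.1 z.2))
    (hweber : ∀ x t i, u x t i
      = (∑ j, u₀ (A x t) j * pd (fun y => A y t j) x i) - pd (fun y => p y t) x i) :
    ∃ P : (Fin d → ℝ) → ℝ → ℝ,
      ContDiff ℝ (⊤ : ℕ∞) (fun z : (Fin d → ℝ) × ℝ => P z.1 z.2)
        ∧ ∀ (x : Fin d → ℝ) (t : ℝ) (i : Fin d),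
          deriv (fun s => u x s i) t
              + ∑ j, u x t j * pd (fun y => u y t i) x j
              + pd (fun y => P y t) x i = 0 := by
  have hUs : ∀ k, ContDiff ℝ (⊤ : ℕ∞) (fun z : ((Fin d → ℝ) × ℝ) => u z.1 z.2 k) := fun k => (contDiff_pi.1 hu) k
  have hGs : ∀ j, ContDiff ℝ (⊤ : ℕ∞) (fun z : ((Fin d → ℝ) × ℝ) => A z.1 z.2 j) := fun j => (contDiff_pi.1 hA) j
  have hWsm : ContDiff ℝ (⊤ : ℕ∞) (fun z : ((Fin d → ℝ) × ℝ) => u₀ (A z.1 z.2)) := hu₀.comp hA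
  have hWs : ∀ j, ContDiff ℝ (⊤ : ℕ∞) (fun z : ((Fin d → ℝ) × ℝ) => u₀ (A z.1 z.2) j) := fun j => (contDiff_pi.1 hWsm) j
  have hsurj : ∀ x t, ∃ a, X a t = x := fun x t => ⟨A x t, hXA x t⟩
  have hA0 : ∀ a, A a 0 = a := fun a => by have := hAX a 0; rwa [hinit] at this
  -- Weber formula in joint-fderiv form
  have hWb : ∀ (x : (Fin d → ℝ)) (t : ℝ) (k : Fin d), u x t k
      = (∑ j, u₀ (A x t) j * fderiv ℝ (fun z : ((Fin d → ℝ) × ℝ) => A z.1 z.2 j) (x, t) (Pi.single k 1, 0))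
        - fderiv ℝ (fun z : ((Fin d → ℝ) × ℝ) => p z.1 z.2) (x, t) (Pi.single k 1, 0) := by
    intro x t k
    have e1 : ∀ j, pd (fun y => A y t j) x k
        = fderiv ℝ (fun z : ((Fin d → ℝ) × ℝ) => A z.1 z.2 j) (x, t) (Pi.single k 1, 0) := fun j =>
      pd_slice (fun z : ((Fin d → ℝ) × ℝ) => A z.1 z.2 j) x t (((hGs j).differentiable (by simp)) _) k
    have e2 : pd (fun y => p y t) x k
        = fderiv ℝ (fun z : ((Fin d → ℝ) × ℝ) => p z.1 z.2) (x, t) (Pi.single k 1, 0) :=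
      pd_slice (fun z : ((Fin d → ℝ) × ℝ) => p z.1 z.2) x t ((hp.differentiable (by simp)) _) k
    rw [hweber x t k]
    simp only [e1, e2]
  refine ⟨fun x t => (∑ k, 1/2 * u x t k * u x t k)
      + (∑ k, u x t k * fderiv ℝ (fun z : ((Fin d → ℝ) × ℝ) => p z.1 z.2) (x, t) (Pi.single k 1, 0))
      + fderiv ℝ (fun z : ((Fin d → ℝ) × ℝ) => p z.1 z.2) (x, t) ((0 : (Fin d → ℝ)), 1), ?_, ?_⟩
  · exact ((ContDiff.sum fun k _ => ((contDiff_const.mul (hUs k)).mul (hUs k))).add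
      (ContDiff.sum fun k _ => (hUs k).mul (smooth_dapply hp _))).add (smooth_dapply hp _)
  intro x t i
  -- abbreviations as equations
  -- convert goal to joint fderiv form
  have e1 : deriv (fun s => u x s i) t
      = fderiv ℝ (fun z : ((Fin d → ℝ) × ℝ) => u z.1 z.2 i) (x, t) ((0 : (Fin d → ℝ)), 1) :=
    deriv_slice (fun z : ((Fin d → ℝ) × ℝ) => u z.1 z.2 i) x t (((hUs i).differentiable (by simp)) _)
  have e2 : ∀ j, pd (fun y => u y t i) x j
      = fderiv ℝ (fun z : ((Fin d → ℝ) × ℝ) => u z.1 z.2 i) (x, t) (Pi.single j 1, 0) := fun j =>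
    pd_slice (fun z : ((Fin d → ℝ) × ℝ) => u z.1 z.2 i) x t (((hUs i).differentiable (by simp)) _) j
  have hPJ : ContDiff ℝ (⊤ : ℕ∞) (fun y : ((Fin d → ℝ) × ℝ) => (∑ k, 1/2 * u y.1 y.2 k * u y.1 y.2 k)
      + (∑ k, u y.1 y.2 k * fderiv ℝ (fun z : ((Fin d → ℝ) × ℝ) => p z.1 z.2) y (Pi.single k 1, 0))
      + fderiv ℝ (fun z : ((Fin d → ℝ) × ℝ) => p z.1 z.2) y ((0 : (Fin d → ℝ)), 1)) :=
    ((ContDiff.sum fun k _ => ((contDiff_const.mul (hUs k)).mul (hUs k))).add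
      (ContDiff.sum fun k _ => (hUs k).mul (smooth_dapply hp _))).add (smooth_dapply hp _)
  have e3 : pd (fun y => (∑ k, 1/2 * u y t k * u y t k)
      + (∑ k, u y t k * fderiv ℝ (fun z : ((Fin d → ℝ) × ℝ) => p z.1 z.2) (y, t) (Pi.single k 1, 0))
      + fderiv ℝ (fun z : ((Fin d → ℝ) × ℝ) => p z.1 z.2) (y, t) ((0 : (Fin d → ℝ)), 1)) x i
      = fderiv ℝ (fun y : ((Fin d → ℝ) × ℝ) => (∑ k, 1/2 * u y.1 y.2 k * u y.1 y.2 k)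
      + (∑ k, u y.1 y.2 k * fderiv ℝ (fun z : ((Fin d → ℝ) × ℝ) => p z.1 z.2) y (Pi.single k 1, 0))
      + fderiv ℝ (fun z : ((Fin d → ℝ) × ℝ) => p z.1 z.2) y ((0 : (Fin d → ℝ)), 1)) (x, t) (Pi.single i 1, 0) :=
    pd_slice _ x t ((hPJ.differentiable (by simp)) _) i
  rw [e1, e3]
  simp only [e2]

  -- transport facts
  have hWtr : ∀ j, fderiv ℝ (fun z : ((Fin d → ℝ) × ℝ) => u₀ (A z.1 z.2) j) (x, t) (u x t, 1) = 0 :=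
    fun j => transport hX hflow hsurj (hWs j) (fun a s => by simp [hAX, hA0]) x t
  have hGtr : ∀ j, fderiv ℝ (fun w : ((Fin d → ℝ) × ℝ) =>
        fderiv ℝ (fun z : ((Fin d → ℝ) × ℝ) => A z.1 z.2 j) w (Pi.single i 1, 0)) (x, t) (u x t, 1)
      = - ∑ k, fderiv ℝ (fun z : ((Fin d → ℝ) × ℝ) => u z.1 z.2 k) (x, t) (Pi.single i 1, 0)
          * fderiv ℝ (fun z : ((Fin d → ℝ) × ℝ) => A z.1 z.2 j) (x, t) (Pi.single k 1, 0) :=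
    fun j => transport_grad hu hX hflow hsurj (hGs j) (fun a s => by simp [hAX, hA0]) i (x, t)
  have hWb' : ∀ k, (∑ j, u₀ (A x t) j * fderiv ℝ (fun z : ((Fin d → ℝ) × ℝ) => A z.1 z.2 j) (x, t) (Pi.single k 1, 0))
      = u x t k + fderiv ℝ (fun z : ((Fin d → ℝ) × ℝ) => p z.1 z.2) (x, t) (Pi.single k 1, 0) :=
    fun k => by have := hWb x t k; linarith
  have hUeq : (fun y : ((Fin d → ℝ) × ℝ) => u y.1 y.2 i) = fun y : ((Fin d → ℝ) × ℝ) =>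
      (∑ j, u₀ (A y.1 y.2) j * fderiv ℝ (fun z : ((Fin d → ℝ) × ℝ) => A z.1 z.2 j) y (Pi.single i 1, 0))
        - fderiv ℝ (fun z : ((Fin d → ℝ) × ℝ) => p z.1 z.2) y (Pi.single i 1, 0) :=
    funext fun y => hWb y.1 y.2 i
  have hS : ContDiff ℝ (⊤ : ℕ∞) (fun y : ((Fin d → ℝ) × ℝ) =>
      ∑ j, u₀ (A y.1 y.2) j * fderiv ℝ (fun z : ((Fin d → ℝ) × ℝ) => A z.1 z.2 j) y (Pi.single i 1, 0)) :=
    ContDiff.sum fun j _ => (hWs j).mul (smooth_dapply (hGs j) _)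
  have hT : ContDiff ℝ (⊤ : ℕ∞) (fun y : ((Fin d → ℝ) × ℝ) =>
      fderiv ℝ (fun z : ((Fin d → ℝ) × ℝ) => p z.1 z.2) y (Pi.single i 1, 0)) := smooth_dapply hp _
  have hPdec := fderiv_decomp (fun w : ((Fin d → ℝ) × ℝ) =>
      fderiv ℝ (fun z : ((Fin d → ℝ) × ℝ) => p z.1 z.2) w (Pi.single i 1, 0)) (x, t) (u x t) 1
  have hdecomp := fderiv_decomp (fun z : ((Fin d → ℝ) × ℝ) => u z.1 z.2 i) (x, t) (u x t) 1
  have hMAIN : fderiv ℝ (fun y : ((Fin d → ℝ) × ℝ) => u y.1 y.2 i) (x, t) (u x t, 1)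
      = -(∑ k, fderiv ℝ (fun z : ((Fin d → ℝ) × ℝ) => u z.1 z.2 k) (x, t) (Pi.single i 1, 0)
            * (u x t k + fderiv ℝ (fun z : ((Fin d → ℝ) × ℝ) => p z.1 z.2) (x, t) (Pi.single k 1, 0)))
        - ((∑ k, u x t k * fderiv ℝ (fun w : ((Fin d → ℝ) × ℝ) =>
              fderiv ℝ (fun z : ((Fin d → ℝ) × ℝ) => p z.1 z.2) w (Pi.single i 1, 0)) (x, t) (Pi.single k 1, 0))
            + 1 * fderiv ℝ (fun w : ((Fin d → ℝ) × ℝ) =>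
              fderiv ℝ (fun z : ((Fin d → ℝ) × ℝ) => p z.1 z.2) w (Pi.single i 1, 0)) (x, t) ((0 : Fin d → ℝ), 1)) := by
    rw [hUeq, fderiv_fun_sub ((hS.differentiable (by simp)) _) ((hT.differentiable (by simp)) _),
      ContinuousLinearMap.sub_apply,
      fderiv_sum_mul hWs (fun j => smooth_dapply (hGs j) _), hPdec]
    simp only [hWtr, hGtr, zero_mul, zero_add]
    congr 1
    calc ∑ j, u₀ (A x t) j * (-(∑ k, fderiv ℝ (fun z : ((Fin d → ℝ) × ℝ) => u z.1 z.2 k) (x, t) (Pi.single i 1, 0)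
            * fderiv ℝ (fun z : ((Fin d → ℝ) × ℝ) => A z.1 z.2 j) (x, t) (Pi.single k 1, 0)))
        = ∑ j, ∑ k, -(fderiv ℝ (fun z : ((Fin d → ℝ) × ℝ) => u z.1 z.2 k) (x, t) (Pi.single i 1, 0)
            * (u₀ (A x t) j * fderiv ℝ (fun z : ((Fin d → ℝ) × ℝ) => A z.1 z.2 j) (x, t) (Pi.single k 1, 0))) :=
          Finset.sum_congr rfl fun j _ => by
            rw [mul_neg, Finset.mul_sum, ← Finset.sum_neg_distrib]
            exact Finset.sum_congr rfl fun k _ => by ring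
      _ = ∑ k, ∑ j, -(fderiv ℝ (fun z : ((Fin d → ℝ) × ℝ) => u z.1 z.2 k) (x, t) (Pi.single i 1, 0)
            * (u₀ (A x t) j * fderiv ℝ (fun z : ((Fin d → ℝ) × ℝ) => A z.1 z.2 j) (x, t) (Pi.single k 1, 0))) :=
          Finset.sum_comm
      _ = ∑ k, -(fderiv ℝ (fun z : ((Fin d → ℝ) × ℝ) => u z.1 z.2 k) (x, t) (Pi.single i 1, 0)
            * ∑ j, u₀ (A x t) j * fderiv ℝ (fun z : ((Fin d → ℝ) × ℝ) => A z.1 z.2 j) (x, t) (Pi.single k 1, 0)) :=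
          Finset.sum_congr rfl fun k _ => by rw [Finset.sum_neg_distrib, ← Finset.mul_sum]
      _ = -(∑ k, fderiv ℝ (fun z : ((Fin d → ℝ) × ℝ) => u z.1 z.2 k) (x, t) (Pi.single i 1, 0)
            * (u x t k + fderiv ℝ (fun z : ((Fin d → ℝ) × ℝ) => p z.1 z.2) (x, t) (Pi.single k 1, 0))) := by
          rw [Finset.sum_neg_distrib]
          simp only [hWb']
  -- expand the pressure-head gradient
  have hq : ∀ k, fderiv ℝ (fun w : ((Fin d → ℝ) × ℝ) => fderiv ℝ (fun z : ((Fin d → ℝ) × ℝ) => p z.1 z.2) w (Pi.single k 1, 0)) (x, t) (Pi.single i 1, 0)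
      = fderiv ℝ (fun w : ((Fin d → ℝ) × ℝ) => fderiv ℝ (fun z : ((Fin d → ℝ) × ℝ) => p z.1 z.2) w (Pi.single i 1, 0)) (x, t) (Pi.single k 1, 0) :=
    fun k => clairaut hp _ _ _
  have hr : fderiv ℝ (fun w : ((Fin d → ℝ) × ℝ) => fderiv ℝ (fun z : ((Fin d → ℝ) × ℝ) => p z.1 z.2) w ((0 : Fin d → ℝ), 1)) (x, t) (Pi.single i 1, 0)
      = fderiv ℝ (fun w : ((Fin d → ℝ) × ℝ) => fderiv ℝ (fun z : ((Fin d → ℝ) × ℝ) => p z.1 z.2) w (Pi.single i 1, 0)) (x, t) ((0 : Fin d → ℝ), 1) :=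
    clairaut hp _ _ _
  have hcm : ∀ k, fderiv ℝ (fun y : ((Fin d → ℝ) × ℝ) => 1/2 * u y.1 y.2 k) (x, t) (Pi.single i 1, 0)
      = 1/2 * fderiv ℝ (fun z : ((Fin d → ℝ) × ℝ) => u z.1 z.2 k) (x, t) (Pi.single i 1, 0) := fun k => by
    rw [fderiv_const_mul (((hUs k).differentiable (by simp)) _) (1/2)]; simp
  have hB1 : ContDiff ℝ (⊤ : ℕ∞) (fun y : ((Fin d → ℝ) × ℝ) => ∑ k, 1/2 * u y.1 y.2 k * u y.1 y.2 k) :=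
    ContDiff.sum fun k _ => ((contDiff_const.mul (hUs k)).mul (hUs k))
  have hB2 : ContDiff ℝ (⊤ : ℕ∞) (fun y : ((Fin d → ℝ) × ℝ) =>
      ∑ k, u y.1 y.2 k * fderiv ℝ (fun z : ((Fin d → ℝ) × ℝ) => p z.1 z.2) y (Pi.single k 1, 0)) :=
    ContDiff.sum fun k _ => (hUs k).mul (smooth_dapply hp _)
  have hB3 : ContDiff ℝ (⊤ : ℕ∞) (fun y : ((Fin d → ℝ) × ℝ) => fderiv ℝ (fun z : ((Fin d → ℝ) × ℝ) => p z.1 z.2) y ((0 : Fin d → ℝ), 1)) :=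
    smooth_dapply hp _
  have hPD : fderiv ℝ (fun y : ((Fin d → ℝ) × ℝ) => (∑ k, 1/2 * u y.1 y.2 k * u y.1 y.2 k)
        + (∑ k, u y.1 y.2 k * fderiv ℝ (fun z : ((Fin d → ℝ) × ℝ) => p z.1 z.2) y (Pi.single k 1, 0))
        + fderiv ℝ (fun z : ((Fin d → ℝ) × ℝ) => p z.1 z.2) y ((0 : Fin d → ℝ), 1)) (x, t) (Pi.single i 1, 0)
      = (∑ k, (1/2 * fderiv ℝ (fun z : ((Fin d → ℝ) × ℝ) => u z.1 z.2 k) (x, t) (Pi.single i 1, 0) * u x t k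
            + 1/2 * u x t k * fderiv ℝ (fun z : ((Fin d → ℝ) × ℝ) => u z.1 z.2 k) (x, t) (Pi.single i 1, 0)))
        + (∑ k, (fderiv ℝ (fun z : ((Fin d → ℝ) × ℝ) => u z.1 z.2 k) (x, t) (Pi.single i 1, 0)
              * fderiv ℝ (fun z : ((Fin d → ℝ) × ℝ) => p z.1 z.2) (x, t) (Pi.single k 1, 0)
            + u x t k * fderiv ℝ (fun w : ((Fin d → ℝ) × ℝ) =>
                fderiv ℝ (fun z : ((Fin d → ℝ) × ℝ) => p z.1 z.2) w (Pi.single i 1, 0)) (x, t) (Pi.single k 1, 0)))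
        + fderiv ℝ (fun w : ((Fin d → ℝ) × ℝ) =>
            fderiv ℝ (fun z : ((Fin d → ℝ) × ℝ) => p z.1 z.2) w (Pi.single i 1, 0)) (x, t) ((0 : Fin d → ℝ), 1) := by
    rw [fderiv_fun_add (((hB1.add hB2).differentiable (by simp)) _) ((hB3.differentiable (by simp)) _),
      ContinuousLinearMap.add_apply,
      fderiv_fun_add ((hB1.differentiable (by simp)) _) ((hB2.differentiable (by simp)) _),
      ContinuousLinearMap.add_apply,
      fderiv_sum_mul (fun k => contDiff_const.mul (hUs k)) hUs,
      fderiv_sum_mul hUs (fun k => smooth_dapply hp _), hr]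
    simp only [hcm, hq]
  -- final algebra
  rw [hPD]
  have s1 : ∑ k, fderiv ℝ (fun z : ((Fin d → ℝ) × ℝ) => u z.1 z.2 k) (x, t) (Pi.single i 1, 0)
        * (u x t k + fderiv ℝ (fun z : ((Fin d → ℝ) × ℝ) => p z.1 z.2) (x, t) (Pi.single k 1, 0))
      = (∑ k, fderiv ℝ (fun z : ((Fin d → ℝ) × ℝ) => u z.1 z.2 k) (x, t) (Pi.single i 1, 0) * u x t k)
        + ∑ k, fderiv ℝ (fun z : ((Fin d → ℝ) × ℝ) => u z.1 z.2 k) (x, t) (Pi.single i 1, 0)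
            * fderiv ℝ (fun z : ((Fin d → ℝ) × ℝ) => p z.1 z.2) (x, t) (Pi.single k 1, 0) := by
    rw [← Finset.sum_add_distrib]
    exact Finset.sum_congr rfl fun k _ => by ring
  have s2 : ∑ k, (1/2 * fderiv ℝ (fun z : ((Fin d → ℝ) × ℝ) => u z.1 z.2 k) (x, t) (Pi.single i 1, 0) * u x t k
        + 1/2 * u x t k * fderiv ℝ (fun z : ((Fin d → ℝ) × ℝ) => u z.1 z.2 k) (x, t) (Pi.single i 1, 0))
      = ∑ k, fderiv ℝ (fun z : ((Fin d → ℝ) × ℝ) => u z.1 z.2 k) (x, t) (Pi.single i 1, 0) * u x t k :=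
    Finset.sum_congr rfl fun k _ => by ring
  have s3 : ∑ k, (fderiv ℝ (fun z : ((Fin d → ℝ) × ℝ) => u z.1 z.2 k) (x, t) (Pi.single i 1, 0)
        * fderiv ℝ (fun z : ((Fin d → ℝ) × ℝ) => p z.1 z.2) (x, t) (Pi.single k 1, 0)
      + u x t k * fderiv ℝ (fun w : ((Fin d → ℝ) × ℝ) =>
          fderiv ℝ (fun z : ((Fin d → ℝ) × ℝ) => p z.1 z.2) w (Pi.single i 1, 0)) (x, t) (Pi.single k 1, 0))
      = (∑ k, fderiv ℝ (fun z : ((Fin d → ℝ) × ℝ) => u z.1 z.2 k) (x, t) (Pi.single i 1, 0)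
          * fderiv ℝ (fun z : ((Fin d → ℝ) × ℝ) => p z.1 z.2) (x, t) (Pi.single k 1, 0))
        + ∑ k, u x t k * fderiv ℝ (fun w : ((Fin d → ℝ) × ℝ) =>
            fderiv ℝ (fun z : ((Fin d → ℝ) × ℝ) => p z.1 z.2) w (Pi.single i 1, 0)) (x, t) (Pi.single k 1, 0) :=
    Finset.sum_add_distrib
  rw [s1] at hMAIN
  linarith [hdecomp, hMAIN, s2, s3]
end

section
/- (Classical Weber formula for Euler solutions.) Let u : ℝⁿ × ℝ → ℝⁿ be a smooth divergence-free vector field solving the incompressible Euler equations ∂ₜu + (u·∇)u + ∇P = 0 for a smooth pressure P, with u(·,0) = u₀, and let X be a smooth flow map of u. Then for all a ∈ ℝⁿ and t, (∇X(a,t))ᵀ u(X(a,t),t) = u₀(a) + ∇ₐ n(a,t), where n(a,t) = ∫₀ᵗ ( ½|u(X(a,s),s)|² − P(X(a,s),s) ) ds and ∇ₐ denotes the gradient with respect to the label a. -/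
open MeasureTheory Metric Set intervalIntegral

section helpers

variable {d : ℕ} {G : Type*} [NormedAddCommGroup G] [NormedSpace ℝ G]

lemma vec_decomp (v : Fin d → ℝ) : ∑ k, v k • (Pi.single k 1 : Fin d → ℝ) = v := by
  funext j
  simp [Finset.sum_apply, Pi.single_apply]

lemma hasFDerivAt_sliceFst {f : (Fin d → ℝ) × ℝ → G} {a : Fin d → ℝ} {t : ℝ}
    {L : ((Fin d → ℝ) × ℝ) →L[ℝ] G} (hf : HasFDerivAt f L (a, t)) :
    HasFDerivAt (fun b => f (b, t)) (L.comp (ContinuousLinearMap.inl ℝ (Fin d → ℝ) ℝ)) a :=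
  hf.comp a (hasFDerivAt_prodMk_left a t)

lemma pd_slice_s7 {f : (Fin d → ℝ) × ℝ → G} {a : Fin d → ℝ} {t : ℝ}
    (hf : DifferentiableAt ℝ f (a, t)) (j : Fin d) :
    pd (fun b => f (b, t)) a j = fderiv ℝ f (a, t) (Pi.single j 1, 0) := by
  rw [pd, (hasFDerivAt_sliceFst hf.hasFDerivAt).fderiv]
  rfl

lemma hasDerivAt_sliceSnd {f : (Fin d → ℝ) × ℝ → G} {a : Fin d → ℝ} {t : ℝ}
    {L : ((Fin d → ℝ) × ℝ) →L[ℝ] G} (hf : HasFDerivAt f L (a, t)) :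
    HasDerivAt (fun s => f (a, s)) (L (0, 1)) t := by
  have h : HasFDerivAt (fun s : ℝ => ((a, s) : (Fin d → ℝ) × ℝ))
      ((0 : ℝ →L[ℝ] (Fin d → ℝ)).prod (ContinuousLinearMap.id ℝ ℝ)) t :=
    (hasFDerivAt_const a t).prodMk (hasFDerivAt_id t)
  have := (hf.comp t h).hasDerivAt
  simpa [Function.comp_def] using this

lemma deriv_slice_s7 {f : (Fin d → ℝ) × ℝ → G} {a : Fin d → ℝ} {t : ℝ}
    (hf : DifferentiableAt ℝ f (a, t)) :
    deriv (fun s => f (a, s)) t = fderiv ℝ f (a, t) (0, 1) :=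
  (hasDerivAt_sliceSnd hf.hasFDerivAt).deriv

lemma dir_decomp (L : ((Fin d → ℝ) × ℝ) →L[ℝ] G) (v : Fin d → ℝ) (c : ℝ) :
    L (v, c) = (∑ k, v k • L (Pi.single k 1, 0)) + c • L (0, 1) := by
  have hvc : ((v, c) : (Fin d → ℝ) × ℝ)
      = (∑ k, v k • ((Pi.single k 1 : Fin d → ℝ), (0 : ℝ))) + c • ((0 : Fin d → ℝ), (1 : ℝ)) := by
    apply Prod.ext
    · simp [Prod.fst_sum, vec_decomp]
    · simp [Prod.snd_sum]
  rw [hvc, map_add, map_sum]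
  simp only [ContinuousLinearMap.map_smul]

end helpers

/-- Classical Weber formula: if `u` solves the incompressible Euler equations
with pressure `P` and initial data `u₀`, and `X` is the flow map of `u`, then
`(∇X(a,t))ᵀ u(X(a,t),t) = u₀(a) + ∇ₐ n(a,t)` where
`n(a,t) = ∫₀ᵗ (½|u(X(a,s),s)|² − P(X(a,s),s)) ds`. -/
theorem classical_weber_formula {d : ℕ}
    (u X : (Fin d → ℝ) → ℝ → Fin d → ℝ)
    (u₀ : (Fin d → ℝ) → Fin d → ℝ)
    (P : (Fin d → ℝ) → ℝ → ℝ)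
    (hu : ContDiff ℝ (⊤ : ℕ∞) (fun z : (Fin d → ℝ) × ℝ => u z.1 z.2))
    (hdiv : ∀ x t, ∑ i, pd (fun y => u y t i) x i = 0)
    (hP : ContDiff ℝ (⊤ : ℕ∞) (fun z : (Fin d → ℝ) × ℝ => P z.1 z.2))
    (heuler : ∀ (x : Fin d → ℝ) (t : ℝ) (i : Fin d),
      deriv (fun s => u x s i) t + ∑ j, u x t j * pd (fun y => u y t i) x j
        + pd (fun y => P y t) x i = 0)
    (hidata : ∀ x, u x 0 = u₀ x)
    (hX : ContDiff ℝ (⊤ : ℕ∞) (fun z : (Fin d → ℝ) × ℝ => X z.1 z.2))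
    (hflow : ∀ a t, deriv (fun s => X a s) t = u (X a t) t)
    (hinit : ∀ a, X a 0 = a) :
    ∀ n : (Fin d → ℝ) → ℝ → ℝ,
      (∀ a t, n a t
        = ∫ s in (0:ℝ)..t,
            ((1:ℝ)/2 * ∑ j, (u (X a s) s j)^2 - P (X a s) s)) →
      ∀ (a : Fin d → ℝ) (t : ℝ) (i : Fin d),
        ∑ j, pd (fun b => X b t j) a i * u (X a t) t j
          = u₀ a i + pd (fun b => n b t) a i := by
  intro n hn a t i
  classical
  -- basic smoothness
  have hg : ContDiff ℝ (⊤ : ℕ∞) (fun z : (Fin d → ℝ) × ℝ => ((X z.1 z.2, z.2) : (Fin d → ℝ) × ℝ)) :=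
    hX.prodMk contDiff_snd
  have hU : ContDiff ℝ (⊤ : ℕ∞) (fun z : (Fin d → ℝ) × ℝ => u (X z.1 z.2) z.2) := hu.comp hg
  have hUj : ∀ j, ContDiff ℝ (⊤ : ℕ∞) (fun z : (Fin d → ℝ) × ℝ => u (X z.1 z.2) z.2 j) :=
    fun j => contDiff_pi.1 hU j
  have hXj : ∀ j, ContDiff ℝ (⊤ : ℕ∞) (fun z : (Fin d → ℝ) × ℝ => X z.1 z.2 j) :=
    fun j => contDiff_pi.1 hX j
  have huj : ∀ j, ContDiff ℝ (⊤ : ℕ∞) (fun z : (Fin d → ℝ) × ℝ => u z.1 z.2 j) :=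
    fun j => contDiff_pi.1 hu j
  have hQ : ContDiff ℝ (⊤ : ℕ∞) (fun z : (Fin d → ℝ) × ℝ => P (X z.1 z.2) z.2) := hP.comp hg
  have hPhi : ContDiff ℝ (⊤ : ℕ∞) (fun z : (Fin d → ℝ) × ℝ =>
      (1:ℝ)/2 * ∑ j, (u (X z.1 z.2) z.2 j)^2 - P (X z.1 z.2) z.2) :=
    (contDiff_const.mul (ContDiff.sum fun j _ => (hUj j).pow 2)).sub hQ
  have hXd : Differentiable ℝ (fun z : (Fin d → ℝ) × ℝ => X z.1 z.2) := hX.differentiable (by simp)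
  have hXjd : ∀ j, Differentiable ℝ (fun z : (Fin d → ℝ) × ℝ => X z.1 z.2 j) :=
    fun j => (hXj j).differentiable (by simp)
  have hUjd : ∀ j, Differentiable ℝ (fun z : (Fin d → ℝ) × ℝ => u (X z.1 z.2) z.2 j) :=
    fun j => (hUj j).differentiable (by simp)
  have hujd : ∀ j, Differentiable ℝ (fun z : (Fin d → ℝ) × ℝ => u z.1 z.2 j) :=
    fun j => (huj j).differentiable (by simp)
  have hQd : Differentiable ℝ (fun z : (Fin d → ℝ) × ℝ => P (X z.1 z.2) z.2) :=
    hQ.differentiable (by simp)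
  have hPd : Differentiable ℝ (fun z : (Fin d → ℝ) × ℝ => P z.1 z.2) := hP.differentiable (by simp)
  have hPhid : Differentiable ℝ (fun z : (Fin d → ℝ) × ℝ =>
      (1:ℝ)/2 * ∑ j, (u (X z.1 z.2) z.2 j)^2 - P (X z.1 z.2) z.2) := hPhi.differentiable (by simp)
  -- pd/deriv bridges
  have pd_u : ∀ (x : Fin d → ℝ) (τ : ℝ) (j k : Fin d),
      pd (fun y => u y τ j) x k
        = fderiv ℝ (fun z : (Fin d → ℝ) × ℝ => u z.1 z.2 j) (x, τ) (Pi.single k 1, 0) :=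
    fun x τ j k => pd_slice_s7 ((hujd j) (x, τ)) k
  have pd_P : ∀ (x : Fin d → ℝ) (τ : ℝ) (k : Fin d),
      pd (fun y => P y τ) x k
        = fderiv ℝ (fun z : (Fin d → ℝ) × ℝ => P z.1 z.2) (x, τ) (Pi.single k 1, 0) :=
    fun x τ k => pd_slice_s7 (hPd (x, τ)) k
  have deriv_u : ∀ (x : Fin d → ℝ) (τ : ℝ) (j : Fin d),
      deriv (fun r => u x r j) τ
        = fderiv ℝ (fun z : (Fin d → ℝ) × ℝ => u z.1 z.2 j) (x, τ) (0, 1) :=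
    fun x τ j => deriv_slice_s7 ((hujd j) (x, τ))
  have pd_X : ∀ (τ : ℝ) (j : Fin d),
      pd (fun b => X b τ j) a i
        = fderiv ℝ (fun z : (Fin d → ℝ) × ℝ => X z.1 z.2 j) (a, τ) (Pi.single i 1, 0) :=
    fun τ j => pd_slice_s7 ((hXjd j) (a, τ)) i
  -- flow in fderiv form
  have hflow' : ∀ (b : Fin d → ℝ) (s : ℝ),
      fderiv ℝ (fun z : (Fin d → ℝ) × ℝ => X z.1 z.2) (b, s) (0, 1) = u (X b s) s := by
    intro b s
    have h1 : HasDerivAt (fun r => X b r)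
        (fderiv ℝ (fun z : (Fin d → ℝ) × ℝ => X z.1 z.2) (b, s) (0, 1)) s :=
      hasDerivAt_sliceSnd (hXd (b, s)).hasFDerivAt
    have hd : DifferentiableAt ℝ (fun r => X b r) s :=
      (hXd (b, s)).comp s ((differentiableAt_const b).prodMk differentiableAt_id)
    have h2 : HasDerivAt (fun r => X b r) (u (X b s) s) s := by
      have := hd.hasDerivAt
      rwa [hflow b s] at this
    exact h1.unique h2
  -- component projections
  have hprojf : ∀ (b : Fin d → ℝ) (s : ℝ) (k : Fin d) (w : (Fin d → ℝ) × ℝ),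
      fderiv ℝ (fun z : (Fin d → ℝ) × ℝ => X z.1 z.2 k) (b, s) w
        = fderiv ℝ (fun z : (Fin d → ℝ) × ℝ => X z.1 z.2) (b, s) w k := by
    intro b s k w
    have hc : HasFDerivAt (fun z : (Fin d → ℝ) × ℝ => X z.1 z.2 k)
        ((ContinuousLinearMap.proj (R := ℝ) (φ := fun _ : Fin d => ℝ) k).comp
          (fderiv ℝ (fun z : (Fin d → ℝ) × ℝ => X z.1 z.2) (b, s))) (b, s) :=
      ((ContinuousLinearMap.proj (R := ℝ) (φ := fun _ : Fin d => ℝ) k).hasFDerivAt).comp (b, s) (hXd (b, s)).hasFDerivAt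
    rw [hc.fderiv]
    rfl
  have hflowj : ∀ (b : Fin d → ℝ) (s : ℝ) (j : Fin d),
      fderiv ℝ (fun z : (Fin d → ℝ) × ℝ => X z.1 z.2 j) (b, s) (0, 1) = u (X b s) s j := by
    intro b s j
    rw [hprojf b s j (0, 1), hflow' b s]
  -- chain rule through the flow map
  have hcomp : ∀ (h : (Fin d → ℝ) × ℝ → ℝ), Differentiable ℝ h →
      ∀ (b : Fin d → ℝ) (s : ℝ) (v : Fin d → ℝ) (c : ℝ),
      fderiv ℝ (fun z : (Fin d → ℝ) × ℝ => h (X z.1 z.2, z.2)) (b, s) (v, c)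
        = fderiv ℝ h (X b s, s)
            (fderiv ℝ (fun z : (Fin d → ℝ) × ℝ => X z.1 z.2) (b, s) (v, c), c) := by
    intro h hh b s v c
    have hgd : HasFDerivAt (fun z : (Fin d → ℝ) × ℝ => ((X z.1 z.2, z.2) : (Fin d → ℝ) × ℝ))
        ((fderiv ℝ (fun z : (Fin d → ℝ) × ℝ => X z.1 z.2) (b, s)).prod
          (ContinuousLinearMap.snd ℝ (Fin d → ℝ) ℝ)) (b, s) :=
      (hXd (b, s)).hasFDerivAt.prodMk hasFDerivAt_snd
    have hcc : HasFDerivAt (fun z : (Fin d → ℝ) × ℝ => h (X z.1 z.2, z.2))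
        ((fderiv ℝ h (X b s, s)).comp
          ((fderiv ℝ (fun z : (Fin d → ℝ) × ℝ => X z.1 z.2) (b, s)).prod
            (ContinuousLinearMap.snd ℝ (Fin d → ℝ) ℝ))) (b, s) :=
      (hh (X b s, s)).hasFDerivAt.comp (b, s) hgd
    rw [hcc.fderiv]
    rfl
  -- Euler in directional form
  have heuler' : ∀ (x : Fin d → ℝ) (τ : ℝ) (j : Fin d),
      fderiv ℝ (fun z : (Fin d → ℝ) × ℝ => u z.1 z.2 j) (x, τ) (u x τ, 1)
        = - pd (fun y => P y τ) x j := by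
    intro x τ j
    rw [dir_decomp, one_smul, ← deriv_u x τ j]
    have hs : ∀ k ∈ Finset.univ, u x τ k •
        fderiv ℝ (fun z : (Fin d → ℝ) × ℝ => u z.1 z.2 j) (x, τ) (Pi.single k 1, 0)
          = u x τ k * pd (fun y => u y τ j) x k := by
      intro k _
      rw [pd_u x τ j k, smul_eq_mul]
    rw [Finset.sum_congr rfl hs]
    linarith [heuler x τ j]
  -- directional derivative of P ∘ flow
  have hdirP : ∀ (x : Fin d → ℝ) (τ : ℝ) (v : Fin d → ℝ),
      fderiv ℝ (fun z : (Fin d → ℝ) × ℝ => P z.1 z.2) (x, τ) (v, 0)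
        = ∑ k, v k * pd (fun y => P y τ) x k := by
    intro x τ v
    rw [dir_decomp (fderiv ℝ (fun z : (Fin d → ℝ) × ℝ => P z.1 z.2) (x, τ)) v 0]
    simp only [zero_smul, smul_eq_mul, zero_mul, add_zero]
    refine Finset.sum_congr rfl fun k _ => ?_
    rw [pd_P x τ k]
  have hdiru : ∀ (x : Fin d → ℝ) (τ : ℝ) (j : Fin d) (v : Fin d → ℝ),
      fderiv ℝ (fun z : (Fin d → ℝ) × ℝ => u z.1 z.2 j) (x, τ) (v, 0)
        = ∑ k, v k * pd (fun y => u y τ j) x k := by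
    intro x τ j v
    rw [dir_decomp (fderiv ℝ (fun z : (Fin d → ℝ) × ℝ => u z.1 z.2 j) (x, τ)) v 0]
    simp only [zero_smul, smul_eq_mul, zero_mul, add_zero]
    refine Finset.sum_congr rfl fun k _ => ?_
    rw [pd_u x τ j k]
  -- mixed-partials symmetry step
  have hA : ∀ (s : ℝ) (j : Fin d),
      HasDerivAt (fun r => fderiv ℝ (fun z : (Fin d → ℝ) × ℝ => X z.1 z.2 j) (a, r)
          (Pi.single i 1, 0))
        (fderiv ℝ (fun z : (Fin d → ℝ) × ℝ => u (X z.1 z.2) z.2 j) (a, s)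
          (Pi.single i 1, 0)) s := by
    intro s j
    have hD : ContDiff ℝ (⊤ : ℕ∞) (fun z => fderiv ℝ (fun z : (Fin d → ℝ) × ℝ => X z.1 z.2 j) z) :=
      (hXj j).fderiv_right (by simp)
    have hf'' : HasFDerivAt (fderiv ℝ (fun z : (Fin d → ℝ) × ℝ => X z.1 z.2 j))
        (fderiv ℝ (fderiv ℝ (fun z : (Fin d → ℝ) × ℝ => X z.1 z.2 j)) (a, s)) (a, s) :=
      ((hD.differentiable (by simp)) (a, s)).hasFDerivAt
    have hsymm := second_derivative_symmetric
      (fun y => ((hXjd j) y).hasFDerivAt) hf''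
      ((0 : Fin d → ℝ), (1 : ℝ)) ((Pi.single i 1 : Fin d → ℝ), (0 : ℝ))
    have happly : HasFDerivAt
        (fun z => fderiv ℝ (fun z : (Fin d → ℝ) × ℝ => X z.1 z.2 j) z
          ((Pi.single i 1 : Fin d → ℝ), (0 : ℝ)))
        ((ContinuousLinearMap.apply ℝ ℝ ((Pi.single i 1 : Fin d → ℝ), (0 : ℝ))).comp
          (fderiv ℝ (fderiv ℝ (fun z : (Fin d → ℝ) × ℝ => X z.1 z.2 j)) (a, s))) (a, s) :=
      ((ContinuousLinearMap.apply ℝ ℝ ((Pi.single i 1 : Fin d → ℝ), (0 : ℝ))).hasFDerivAt).comp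
        (a, s) hf''
    have h1 : HasDerivAt
        (fun r => fderiv ℝ (fun z : (Fin d → ℝ) × ℝ => X z.1 z.2 j) (a, r) (Pi.single i 1, 0))
        (fderiv ℝ (fderiv ℝ (fun z : (Fin d → ℝ) × ℝ => X z.1 z.2 j)) (a, s) (0, 1)
          (Pi.single i 1, 0)) s :=
      hasDerivAt_sliceSnd happly
    have hWeq : (fun z : (Fin d → ℝ) × ℝ =>
        fderiv ℝ (fun z : (Fin d → ℝ) × ℝ => X z.1 z.2 j) z ((0 : Fin d → ℝ), (1 : ℝ)))
          = fun z : (Fin d → ℝ) × ℝ => u (X z.1 z.2) z.2 j := by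
      funext z
      obtain ⟨b, s'⟩ := z
      exact hflowj b s' j
    have happly2 : HasFDerivAt
        (fun z => fderiv ℝ (fun z : (Fin d → ℝ) × ℝ => X z.1 z.2 j) z
          ((0 : Fin d → ℝ), (1 : ℝ)))
        ((ContinuousLinearMap.apply ℝ ℝ ((0 : Fin d → ℝ), (1 : ℝ))).comp
          (fderiv ℝ (fderiv ℝ (fun z : (Fin d → ℝ) × ℝ => X z.1 z.2 j)) (a, s))) (a, s) :=
      ((ContinuousLinearMap.apply ℝ ℝ ((0 : Fin d → ℝ), (1 : ℝ))).hasFDerivAt).comp (a, s) hf''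
    rw [hWeq] at happly2
    have hval : fderiv ℝ (fun z : (Fin d → ℝ) × ℝ => u (X z.1 z.2) z.2 j) (a, s)
        (Pi.single i 1, 0)
          = fderiv ℝ (fderiv ℝ (fun z : (Fin d → ℝ) × ℝ => X z.1 z.2 j)) (a, s)
            (Pi.single i 1, 0) (0, 1) := by
      rw [happly2.fderiv]
      rfl
    rw [hval, ← hsymm]
    exact h1
  -- time derivative of u along trajectories
  have hB : ∀ (s : ℝ) (j : Fin d),
      HasDerivAt (fun r => u (X a r) r j)
        (fderiv ℝ (fun z : (Fin d → ℝ) × ℝ => u (X z.1 z.2) z.2 j) (a, s) (0, 1)) s :=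
    fun s j => hasDerivAt_sliceSnd ((hUjd j) (a, s)).hasFDerivAt
  -- directional derivative of the Bernoulli integrand
  have hPhiDir : ∀ s : ℝ,
      fderiv ℝ (fun z : (Fin d → ℝ) × ℝ =>
          (1:ℝ)/2 * ∑ j, (u (X z.1 z.2) z.2 j)^2 - P (X z.1 z.2) z.2) (a, s) (Pi.single i 1, 0)
        = ∑ j, u (X a s) s j *
            fderiv ℝ (fun z : (Fin d → ℝ) × ℝ => u (X z.1 z.2) z.2 j) (a, s) (Pi.single i 1, 0)
          - fderiv ℝ (fun z : (Fin d → ℝ) × ℝ => P (X z.1 z.2) z.2) (a, s) (Pi.single i 1, 0) := by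
    intro s
    have hfun : (fun z : (Fin d → ℝ) × ℝ =>
        (1:ℝ)/2 * ∑ j, (u (X z.1 z.2) z.2 j)^2 - P (X z.1 z.2) z.2)
          = (fun z : (Fin d → ℝ) × ℝ =>
        (1:ℝ)/2 * ∑ j, (u (X z.1 z.2) z.2 j) * (u (X z.1 z.2) z.2 j) - P (X z.1 z.2) z.2) := by
      funext z
      simp [pow_two]
    rw [hfun]
    have h1 := (HasFDerivAt.const_mul
        (HasFDerivAt.fun_sum (fun j (_ : j ∈ Finset.univ) =>
          (((hUjd j) (a, s)).hasFDerivAt.fun_mul ((hUjd j) (a, s)).hasFDerivAt))) ((1:ℝ)/2)).fun_sub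
        ((hQd (a, s)).hasFDerivAt)
    rw [h1.fderiv]
    simp only [ContinuousLinearMap.sub_apply, ContinuousLinearMap.smul_apply,
      ContinuousLinearMap.sum_apply, ContinuousLinearMap.add_apply, smul_eq_mul]
    rw [Finset.mul_sum]
    congr 1
    refine Finset.sum_congr rfl fun j _ => ?_
    ring
  -- the cross term
  have hcross : ∀ s : ℝ,
      ∑ j, fderiv ℝ (fun z : (Fin d → ℝ) × ℝ => X z.1 z.2 j) (a, s) (Pi.single i 1, 0) *
          fderiv ℝ (fun z : (Fin d → ℝ) × ℝ => u (X z.1 z.2) z.2 j) (a, s) (0, 1)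
        = - fderiv ℝ (fun z : (Fin d → ℝ) × ℝ => P (X z.1 z.2) z.2) (a, s)
            (Pi.single i 1, 0) := by
    intro s
    have hW01 : ∀ j, fderiv ℝ (fun z : (Fin d → ℝ) × ℝ => u (X z.1 z.2) z.2 j) (a, s) (0, 1)
        = - pd (fun y => P y s) (X a s) j := by
      intro j
      have h := hcomp (fun w : (Fin d → ℝ) × ℝ => u w.1 w.2 j) (hujd j) a s 0 1
      rw [h, hflow' a s]
      exact heuler' (X a s) s j
    have hQe : fderiv ℝ (fun z : (Fin d → ℝ) × ℝ => P (X z.1 z.2) z.2) (a, s)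
        (Pi.single i 1, 0)
          = ∑ k, fderiv ℝ (fun z : (Fin d → ℝ) × ℝ => X z.1 z.2) (a, s) (Pi.single i 1, 0) k *
              pd (fun y => P y s) (X a s) k := by
      have h := hcomp (fun w : (Fin d → ℝ) × ℝ => P w.1 w.2) hPd a s (Pi.single i 1) 0
      rw [h, hdirP (X a s) s _]
    rw [hQe, ← Finset.sum_neg_distrib]
    refine Finset.sum_congr rfl fun j _ => ?_
    rw [hW01 j, hprojf a s j (Pi.single i 1, 0)]
    ring
  -- derivative of the transported momentum
  have hFderiv : ∀ s : ℝ,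
      HasDerivAt (fun r => ∑ j,
          fderiv ℝ (fun z : (Fin d → ℝ) × ℝ => X z.1 z.2 j) (a, r) (Pi.single i 1, 0) *
            u (X a r) r j)
        (fderiv ℝ (fun z : (Fin d → ℝ) × ℝ =>
          (1:ℝ)/2 * ∑ j, (u (X z.1 z.2) z.2 j)^2 - P (X z.1 z.2) z.2) (a, s)
            (Pi.single i 1, 0)) s := by
    intro s
    have h := HasDerivAt.fun_sum (fun j (_ : j ∈ Finset.univ) => (hA s j).fun_mul (hB s j))
    have hval : (∑ j,
        (fderiv ℝ (fun z : (Fin d → ℝ) × ℝ => u (X z.1 z.2) z.2 j) (a, s) (Pi.single i 1, 0) *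
            u (X a s) s j +
          fderiv ℝ (fun z : (Fin d → ℝ) × ℝ => X z.1 z.2 j) (a, s) (Pi.single i 1, 0) *
            fderiv ℝ (fun z : (Fin d → ℝ) × ℝ => u (X z.1 z.2) z.2 j) (a, s) (0, 1)))
        = fderiv ℝ (fun z : (Fin d → ℝ) × ℝ =>
            (1:ℝ)/2 * ∑ j, (u (X z.1 z.2) z.2 j)^2 - P (X z.1 z.2) z.2) (a, s)
              (Pi.single i 1, 0) := by
      rw [hPhiDir s, Finset.sum_add_distrib, hcross s]
      rw [sub_eq_add_neg]
      congr 1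
      exact Finset.sum_congr rfl fun j _ => mul_comm _ _
    rw [← hval]
    exact h
  -- fundamental theorem of calculus
  have hDcont : Continuous fun s => fderiv ℝ (fun z : (Fin d → ℝ) × ℝ =>
      (1:ℝ)/2 * ∑ j, (u (X z.1 z.2) z.2 j)^2 - P (X z.1 z.2) z.2) (a, s) (Pi.single i 1, 0) := by
    have h1 : Continuous (fderiv ℝ (fun z : (Fin d → ℝ) × ℝ =>
        (1:ℝ)/2 * ∑ j, (u (X z.1 z.2) z.2 j)^2 - P (X z.1 z.2) z.2)) :=
      hPhi.continuous_fderiv (by simp)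
    exact (h1.comp (continuous_const.prodMk continuous_id)).clm_apply continuous_const
  have hFTC : ∫ s in (0:ℝ)..t, fderiv ℝ (fun z : (Fin d → ℝ) × ℝ =>
        (1:ℝ)/2 * ∑ j, (u (X z.1 z.2) z.2 j)^2 - P (X z.1 z.2) z.2) (a, s) (Pi.single i 1, 0)
      = (∑ j, fderiv ℝ (fun z : (Fin d → ℝ) × ℝ => X z.1 z.2 j) (a, t) (Pi.single i 1, 0) *
          u (X a t) t j)
        - (∑ j, fderiv ℝ (fun z : (Fin d → ℝ) × ℝ => X z.1 z.2 j) (a, 0) (Pi.single i 1, 0) *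
          u (X a 0) 0 j) :=
    intervalIntegral.integral_eq_sub_of_hasDerivAt (fun s _ => hFderiv s)
      (hDcont.intervalIntegrable 0 t)
  -- differentiation under the integral sign
  have hfd' : Continuous (fun z : (Fin d → ℝ) × ℝ =>
      (fderiv ℝ (fun z : (Fin d → ℝ) × ℝ =>
        (1:ℝ)/2 * ∑ j, (u (X z.1 z.2) z.2 j)^2 - P (X z.1 z.2) z.2) z).comp
          (ContinuousLinearMap.inl ℝ (Fin d → ℝ) ℝ)) :=
    (hPhi.continuous_fderiv (by simp)).clm_comp continuous_const
  have key : HasFDerivAt (fun b => ∫ s in (0:ℝ)..t,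
        ((1:ℝ)/2 * ∑ j, (u (X b s) s j)^2 - P (X b s) s))
      (∫ s in (0:ℝ)..t, (fderiv ℝ (fun z : (Fin d → ℝ) × ℝ =>
        (1:ℝ)/2 * ∑ j, (u (X z.1 z.2) z.2 j)^2 - P (X z.1 z.2) z.2) (a, s)).comp
          (ContinuousLinearMap.inl ℝ (Fin d → ℝ) ℝ)) a := by
    obtain ⟨C, hC⟩ :=
      ((isCompact_closedBall a 1).prod isCompact_uIcc).exists_bound_of_continuousOn
        hfd'.continuousOn
    refine intervalIntegral.hasFDerivAt_integral_of_dominated_of_fderiv_le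
      (F := fun (x : Fin d → ℝ) (s : ℝ) => (1:ℝ)/2 * ∑ j, (u (X x s) s j)^2 - P (X x s) s)
      (F' := fun (x : Fin d → ℝ) (s : ℝ) => (fderiv ℝ (fun z : (Fin d → ℝ) × ℝ =>
        (1:ℝ)/2 * ∑ j, (u (X z.1 z.2) z.2 j)^2 - P (X z.1 z.2) z.2) (x, s)).comp
          (ContinuousLinearMap.inl ℝ (Fin d → ℝ) ℝ))
      (bound := fun _ => C) (Metric.ball_mem_nhds a zero_lt_one) ?_ ?_ ?_ ?_ ?_ ?_
    · exact Filter.Eventually.of_forall fun x =>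
        ((hPhi.continuous.comp (continuous_const.prodMk continuous_id)).aestronglyMeasurable)
    · exact (hPhi.continuous.comp (continuous_const.prodMk continuous_id)).intervalIntegrable 0 t
    · exact (hfd'.comp (continuous_const.prodMk continuous_id)).aestronglyMeasurable
    · refine MeasureTheory.ae_of_all _ fun s hs x hx => ?_
      exact hC (x, s) (Set.mk_mem_prod (Metric.ball_subset_closedBall hx)
        (Set.uIoc_subset_uIcc hs))
    · exact intervalIntegrable_const
    · refine MeasureTheory.ae_of_all _ fun s hs x hx => ?_
      exact hasFDerivAt_sliceFst ((hPhid (x, s)).hasFDerivAt)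
  have hnpd : pd (fun b => n b t) a i
      = ∫ s in (0:ℝ)..t, fderiv ℝ (fun z : (Fin d → ℝ) × ℝ =>
          (1:ℝ)/2 * ∑ j, (u (X z.1 z.2) z.2 j)^2 - P (X z.1 z.2) z.2) (a, s)
            (Pi.single i 1, 0) := by
    have hfun : (fun b => n b t) = fun b => ∫ s in (0:ℝ)..t,
        ((1:ℝ)/2 * ∑ j, (u (X b s) s j)^2 - P (X b s) s) := funext fun b => hn b t
    have hint : IntervalIntegrable (fun s : ℝ => (fderiv ℝ (fun z : (Fin d → ℝ) × ℝ =>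
        (1:ℝ)/2 * ∑ j, (u (X z.1 z.2) z.2 j)^2 - P (X z.1 z.2) z.2) (a, s)).comp
          (ContinuousLinearMap.inl ℝ (Fin d → ℝ) ℝ)) MeasureTheory.volume 0 t :=
      (hfd'.comp (continuous_const.prodMk continuous_id)).intervalIntegrable 0 t
    rw [pd, hfun, key.fderiv]
    rw [ContinuousLinearMap.intervalIntegral_apply hint (Pi.single i 1)]
    simp only [ContinuousLinearMap.comp_apply, ContinuousLinearMap.inl_apply]
  -- initial value
  have hF0 : (∑ j, fderiv ℝ (fun z : (Fin d → ℝ) × ℝ => X z.1 z.2 j) (a, 0)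
      (Pi.single i 1, 0) * u (X a 0) 0 j) = u₀ a i := by
    have hXj0 : ∀ j, fderiv ℝ (fun z : (Fin d → ℝ) × ℝ => X z.1 z.2 j) (a, 0)
        (Pi.single i 1, 0) = (Pi.single i 1 : Fin d → ℝ) j := by
      intro j
      rw [← pd_X 0 j]
      have hfun : (fun b => X b 0 j) = fun b : Fin d → ℝ => b j :=
        funext fun b => by rw [hinit b]
      rw [pd, hfun]
      have hp : HasFDerivAt (fun b : Fin d → ℝ => b j)
          (ContinuousLinearMap.proj (R := ℝ) (φ := fun _ : Fin d => ℝ) j) a :=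
        (ContinuousLinearMap.proj (R := ℝ) (φ := fun _ : Fin d => ℝ) j).hasFDerivAt
      rw [hp.fderiv]
      rfl
    have : ∀ j ∈ Finset.univ, fderiv ℝ (fun z : (Fin d → ℝ) × ℝ => X z.1 z.2 j) (a, 0)
        (Pi.single i 1, 0) * u (X a 0) 0 j = (Pi.single i 1 : Fin d → ℝ) j * u a 0 j := by
      intro j _
      rw [hXj0 j, hinit a]
    rw [Finset.sum_congr rfl this]
    have : ∑ j, (Pi.single i 1 : Fin d → ℝ) j * u a 0 j = u a 0 i := by
      simp [Pi.single_apply]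
    rw [this, hidata a]
  -- assemble
  have hlhs : ∑ j, pd (fun b => X b t j) a i * u (X a t) t j
      = ∑ j, fderiv ℝ (fun z : (Fin d → ℝ) × ℝ => X z.1 z.2 j) (a, t)
          (Pi.single i 1, 0) * u (X a t) t j :=
    Finset.sum_congr rfl fun j _ => by rw [pd_X t j]
  rw [hlhs, hnpd, hFTC, ← hF0]
  ring
end

section
/- (Liouville formula for the flow Jacobian.) Let u : ℝⁿ × ℝ → ℝⁿ be a smooth time-dependent vector field and X a smooth flow map of u. Then for all a ∈ ℝⁿ and t ≥ 0, det(∇X(a,t)) = exp( ∫₀ᵗ (div u)(X(a,s),s) ds ). In particular det(∇X(a,t)) > 0, so X(·,t) is a local diffeomorphism for all time, and if u is divergence free then det(∇X(a,t)) = 1. -/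
lemma hasDerivAt_slice {d : ℕ} {E : Type*} [NormedAddCommGroup E] [NormedSpace ℝ E]
    {f : (Fin d → ℝ) × ℝ → E} (hf : Differentiable ℝ f) (a : Fin d → ℝ) (t : ℝ) :
    HasDerivAt (fun s => f (a, s)) (fderiv ℝ f (a, t) (0, 1)) t := by
  have h1 := (hf (a, t)).hasFDerivAt.comp t (hasFDerivAt_prodMk_right a t)
  simpa [Function.comp_def] using h1.hasDerivAt

lemma pd_eq {d : ℕ} {f : (Fin d → ℝ) × ℝ → Fin d → ℝ} (hf : Differentiable ℝ f)
    (a : Fin d → ℝ) (t : ℝ) (i j : Fin d) :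
    pd (fun b => f (b, t) i) a j = fderiv ℝ f (a, t) (Pi.single j 1, 0) i := by
  have h1 : HasFDerivAt (fun b => f (b, t))
      ((fderiv ℝ f (a, t)).comp (ContinuousLinearMap.inl ℝ (Fin d → ℝ) ℝ)) a :=
    (hf (a, t)).hasFDerivAt.comp a (hasFDerivAt_prodMk_left a t)
  have h2 : HasFDerivAt (fun b => f (b, t) i)
      ((ContinuousLinearMap.proj (R := ℝ) (φ := fun _ : Fin d => ℝ) i).comp
        ((fderiv ℝ f (a, t)).comp (ContinuousLinearMap.inl ℝ (Fin d → ℝ) ℝ))) a :=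
    HasFDerivAt.comp a
      (ContinuousLinearMap.proj (R := ℝ) (φ := fun _ : Fin d => ℝ) i).hasFDerivAt h1
  rw [pd, h2.fderiv]
  simp

open Matrix

noncomputable def detCM (d : ℕ) : ContinuousMultilinearMap ℝ (fun _ : Fin d => (Fin d → ℝ)) ℝ :=
  MultilinearMap.mkContinuous
    (Matrix.detRowAlternating (R := ℝ) (n := Fin d)).toMultilinearMap
    (Nat.factorial d) (by
      intro m
      have : Matrix.detRowAlternating (R := ℝ) (n := Fin d) m = Matrix.det (Matrix.of m) := rfl
      simp only [AlternatingMap.coe_multilinearMap, this]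
      rw [Matrix.det_apply]
      calc ‖∑ σ : Equiv.Perm (Fin d), Equiv.Perm.sign σ • ∏ i, Matrix.of m (σ i) i‖
          ≤ ∑ σ : Equiv.Perm (Fin d), ‖Equiv.Perm.sign σ • ∏ i, Matrix.of m (σ i) i‖ :=
            norm_sum_le _ _
        _ ≤ ∑ σ : Equiv.Perm (Fin d), ∏ i, ‖m i‖ := by
            apply Finset.sum_le_sum
            intro σ _
            have h1 : ‖Equiv.Perm.sign σ • ∏ i, Matrix.of m (σ i) i‖
                = ‖∏ i, Matrix.of m (σ i) i‖ := by
              rcases Int.units_eq_one_or (Equiv.Perm.sign σ) with h | h <;> simp [h]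
            rw [h1]
            have h2 : ‖∏ i, Matrix.of m (σ i) i‖ ≤ ∏ i, ‖m (σ i)‖ := by
              rw [norm_prod]
              apply Finset.prod_le_prod (fun _ _ => norm_nonneg _)
              intro i _
              exact norm_le_pi_norm (m (σ i)) i
            refine h2.trans (le_of_eq ?_)
            exact Equiv.prod_comp σ (fun i => ‖m i‖)
        _ = (Nat.factorial d) * ∏ i, ‖m i‖ := by
            rw [Finset.sum_const, Finset.card_univ, Fintype.card_perm, Fintype.card_fin,
              nsmul_eq_mul]
      )

lemma hasDerivAt_det_rows {d : ℕ} {r : ℝ → Fin d → Fin d → ℝ} {r' : Fin d → Fin d → ℝ}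
    {t : ℝ} (h : HasDerivAt r r' t) :
    HasDerivAt (fun s => Matrix.det (Matrix.of (r s)))
      (∑ i, Matrix.det ((Matrix.of (r t)).updateRow i (r' i))) t := by
  have h1 := (detCM d).hasFDerivAt (x := r t)
  have h2 := h1.comp_hasDerivAt t h
  have h3 : ((detCM d).linearDeriv (r t)) r' = ∑ i, Matrix.det ((Matrix.of (r t)).updateRow i (r' i)) := by
    rw [ContinuousMultilinearMap.linearDeriv_apply]
    rfl
  rw [h3] at h2
  exact h2


/-- Liouville formula: `det(∇X(a,t)) = exp(∫₀ᵗ (div u)(X(a,s),s) ds)` for the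
flow map `X` of `u`; in particular the determinant is positive, and equals `1`
if `u` is divergence free. -/
theorem liouville_formula_flow_jacobian {d : ℕ}
    (u X : (Fin d → ℝ) → ℝ → Fin d → ℝ)
    (hu : ContDiff ℝ (⊤ : ℕ∞) (fun z : (Fin d → ℝ) × ℝ => u z.1 z.2))
    (hX : ContDiff ℝ (⊤ : ℕ∞) (fun z : (Fin d → ℝ) × ℝ => X z.1 z.2))
    (hflow : ∀ a t, deriv (fun s => X a s) t = u (X a t) t)
    (hinit : ∀ a, X a 0 = a) :
    ∀ (a : Fin d → ℝ) (t : ℝ), 0 ≤ t →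
      (Matrix.det (Matrix.of fun i j => pd (fun b => X b t i) a j)
          = Real.exp (∫ s in (0:ℝ)..t, ∑ i, pd (fun y => u y s i) (X a s) i))
        ∧ 0 < Matrix.det (Matrix.of fun i j => pd (fun b => X b t i) a j)
        ∧ ((∀ x s, ∑ i, pd (fun y => u y s i) x i = 0) →
            Matrix.det (Matrix.of fun i j => pd (fun b => X b t i) a j) = 1) := by
  intro a t _
  -- notation
  set F : (Fin d → ℝ) × ℝ → Fin d → ℝ := fun z => X z.1 z.2 with hFdef
  set G : (Fin d → ℝ) × ℝ → Fin d → ℝ := fun z => u z.1 z.2 with hGdef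
  have hFd : Differentiable ℝ F := hX.differentiable (by simp)
  have hGd : Differentiable ℝ G := hu.differentiable (by simp)
  have hD : ContDiff ℝ 1 (fderiv ℝ F) := hX.fderiv_right (WithTop.coe_le_coe.2 le_top)
  set M : ℝ → Fin d → Fin d → ℝ := fun s i j => fderiv ℝ F (a, s) (Pi.single j 1, 0) i with hMdef
  set A : ℝ → Fin d → Fin d → ℝ :=
    fun s i k => fderiv ℝ G (X a s, s) (Pi.single k 1, 0) i with hAdef
  set φ : ℝ → ℝ := fun s => ∑ i, pd (fun y => u y s i) (X a s) i with hφdef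
  have hpdX : ∀ (s : ℝ) i j, pd (fun b => X b s i) a j = M s i j := by
    intro s i j
    exact pd_eq hFd a s i j
  have hφA : ∀ s, φ s = ∑ i, A s i i := by
    intro s
    refine Finset.sum_congr rfl fun i _ => ?_
    exact pd_eq hGd (X a s) s i i
  -- flow velocity identity
  have hV : ∀ z : (Fin d → ℝ) × ℝ, fderiv ℝ F z (0, 1) = G (F z, z.2) := by
    intro z
    have h1 := (hasDerivAt_slice hFd z.1 z.2).deriv
    have h2 : deriv (fun s => F (z.1, s)) z.2 = u (X z.1 z.2) z.2 := hflow z.1 z.2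
    rw [← h1, h2]
  -- derivative of M
  have hMderiv : ∀ s : ℝ, HasDerivAt M (fun i j => ∑ k, A s i k * M s k j) s := by
    intro s
    have hsym : IsSymmSndFDerivAt ℝ F (a, s) := hX.contDiffAt.isSymmSndFDerivAt (by simp; exact WithTop.coe_le_coe.2 le_top)
    -- second derivative through V
    have hVfun : (fun z : (Fin d → ℝ) × ℝ => fderiv ℝ F z (0, 1))
        = fun z : (Fin d → ℝ) × ℝ => G (F z, z.2) := funext hV
    have hVfd : fderiv ℝ (fun z : (Fin d → ℝ) × ℝ => fderiv ℝ F z (0, 1)) (a, s)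
        = (fderiv ℝ (fderiv ℝ F) (a, s)).flip (0, 1) := by
      rw [fderiv_clm_apply ((hD.differentiable one_ne_zero) (a, s)) (differentiableAt_const _)]
      simp
    have hzmap : HasFDerivAt (fun z : (Fin d → ℝ) × ℝ => (F z, z.2))
        ((fderiv ℝ F (a, s)).prod (ContinuousLinearMap.snd ℝ (Fin d → ℝ) ℝ)) (a, s) :=
      (hFd (a, s)).hasFDerivAt.prodMk (hasFDerivAt_snd)
    have hcomp : HasFDerivAt (fun z : (Fin d → ℝ) × ℝ => G (F z, z.2))
        ((fderiv ℝ G (F (a, s), s)).comp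
          ((fderiv ℝ F (a, s)).prod (ContinuousLinearMap.snd ℝ (Fin d → ℝ) ℝ))) (a, s) :=
      (hGd (F (a, s), s)).hasFDerivAt.comp (g := G) (a, s) hzmap
    have hXa : F (a, s) = X a s := rfl
    have key : ∀ i j : Fin d,
        fderiv ℝ (fderiv ℝ F) (a, s) (0, 1) (Pi.single j 1, 0) i = ∑ k, A s i k * M s k j := by
      intro i j
      rw [hsym.eq (0, 1) (Pi.single j 1, 0)]
      have e1 : fderiv ℝ (fderiv ℝ F) (a, s) (Pi.single j 1, 0) (0, 1)
          = fderiv ℝ (fun z : (Fin d → ℝ) × ℝ => fderiv ℝ F z (0, 1)) (a, s) (Pi.single j 1, 0) := by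
        rw [hVfd]; rfl
      rw [e1, hVfun, hcomp.fderiv]
      have e2 : ((fderiv ℝ F (a, s)).prod (ContinuousLinearMap.snd ℝ (Fin d → ℝ) ℝ))
          ((Pi.single j 1 : Fin d → ℝ), (0 : ℝ)) = (fun k => M s k j, (0 : ℝ)) := by
        simp [ContinuousLinearMap.prod_apply]
        rfl
      rw [ContinuousLinearMap.comp_apply, e2]
      have h4 : (fun k => M s k j : Fin d → ℝ) = ∑ k, (M s k j) • (Pi.single k 1 : Fin d → ℝ) := by
        funext l
        simp only [Finset.sum_apply, Pi.smul_apply, smul_eq_mul]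
        rw [Finset.sum_eq_single l (fun k _ hk => by simp [Pi.single_apply, hk]) (by simp)]
        simp
      have e3 : ((fun k => M s k j : Fin d → ℝ), (0 : ℝ))
          = ∑ k, (M s k j) • ((Pi.single k 1 : Fin d → ℝ), (0 : ℝ)) := by
        rw [Prod.ext_iff]
        constructor
        · rw [Prod.fst_sum]
          simpa using h4
        · rw [Prod.snd_sum]
          simp
      rw [e3, map_sum]
      simp only [_root_.map_smul]
      rw [Finset.sum_apply]
      refine Finset.sum_congr rfl fun k _ => ?_
      simp only [Pi.smul_apply, smul_eq_mul]
      rw [mul_comm]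
    rw [hasDerivAt_pi]
    intro i
    rw [hasDerivAt_pi]
    intro j
    have hcol : HasDerivAt (fun r => fderiv ℝ F (a, r) ((Pi.single j 1 : Fin d → ℝ), (0 : ℝ)))
        (fderiv ℝ (fderiv ℝ F) (a, s) (0, 1) ((Pi.single j 1 : Fin d → ℝ), (0 : ℝ))) s := by
      have h := (hasDerivAt_slice (f := fderiv ℝ F) (hD.differentiable one_ne_zero) a s).clm_apply
        (hasDerivAt_const s ((Pi.single j 1 : Fin d → ℝ), (0 : ℝ)))
      simpa using h
    have hentry := (hasDerivAt_pi.1 hcol) i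
    rw [key i j] at hentry
    exact hentry
  -- determinant ODE
  have hgder : ∀ s : ℝ, HasDerivAt (fun r => Matrix.det (Matrix.of (M r)))
      (φ s * Matrix.det (Matrix.of (M s))) s := by
    intro s
    have h := hasDerivAt_det_rows (hMderiv s)
    have e : (∑ i, Matrix.det ((Matrix.of (M s)).updateRow i
        ((fun i j => ∑ k, A s i k * M s k j) i)))
        = φ s * Matrix.det (Matrix.of (M s)) := by
      have e1 : ∀ i : Fin d, ((fun j => ∑ k, A s i k * M s k j) : Fin d → ℝ)
          = ∑ k, (A s i k) • (Matrix.of (M s)) k := by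
        intro i
        funext j
        simp [Finset.sum_apply]
      calc (∑ i, Matrix.det ((Matrix.of (M s)).updateRow i
            ((fun i j => ∑ k, A s i k * M s k j) i)))
          = ∑ i, (A s i i) • Matrix.det (Matrix.of (M s)) := by
            refine Finset.sum_congr rfl fun i _ => ?_
            rw [show ((fun i j => ∑ k, A s i k * M s k j) i) = fun j => ∑ k, A s i k * M s k j
              from rfl, e1 i]
            exact Matrix.det_updateRow_sum (Matrix.of (M s)) i (fun k => A s i k)
        _ = φ s * Matrix.det (Matrix.of (M s)) := by
            rw [hφA s, ← Finset.sum_smul, smul_eq_mul]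
    rw [← e]
    exact h
  -- continuity of φ
  have hφcont : Continuous φ := by
    have hfdG : Continuous (fderiv ℝ G) := (hu.fderiv_right (m := 1) (WithTop.coe_le_coe.2 le_top)).continuous
    have hXa : Continuous (fun s : ℝ => X a s) := by
      have : Continuous (fun s : ℝ => F (a, s)) := hFd.continuous.comp (Continuous.prodMk_right a)
      exact this
    rw [show φ = fun s => ∑ i, A s i i from funext hφA]
    refine continuous_finset_sum _ fun i _ => ?_
    have h1 : Continuous (fun s : ℝ => fderiv ℝ G (X a s, s)) :=
      hfdG.comp (hXa.prodMk continuous_id)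
    exact (continuous_apply i).comp (h1.clm_apply continuous_const)
  -- FTC
  have hΨ : ∀ s : ℝ, HasDerivAt (fun r => ∫ x in (0:ℝ)..r, φ x) (φ s) s := by
    intro s
    exact intervalIntegral.integral_hasDerivAt_right (hφcont.intervalIntegrable _ _)
      (hφcont.stronglyMeasurableAtFilter _ _) hφcont.continuousAt
  -- constancy of the quotient
  have hh : ∀ s : ℝ, HasDerivAt
      (fun r => Matrix.det (Matrix.of (M r)) * Real.exp (-(∫ x in (0:ℝ)..r, φ x))) 0 s := by
    intro s
    have h1 := (hgder s).fun_mul (((hΨ s).fun_neg).exp)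
    refine h1.congr_deriv ?_
    ring
  have hconst : ∀ s : ℝ,
      Matrix.det (Matrix.of (M s)) * Real.exp (-(∫ x in (0:ℝ)..s, φ x))
      = Matrix.det (Matrix.of (M 0)) * Real.exp (-(∫ x in (0:ℝ)..(0:ℝ), φ x)) := by
    intro s
    exact is_const_of_deriv_eq_zero (fun x => (hh x).differentiableAt) (fun x => (hh x).deriv) s 0
  have hM0 : Matrix.of (M 0) = (1 : Matrix (Fin d) (Fin d) ℝ) := by
    ext i j
    have h1 : M 0 i j = pd (fun b => X b 0 i) a j := (hpdX 0 i j).symm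
    have h2 : (fun b : Fin d → ℝ => X b 0 i) = fun b => b i := by
      funext b; rw [hinit]
    have h3 : pd (fun b : Fin d → ℝ => b i) a j = (Pi.single j 1 : Fin d → ℝ) i := by
      have h4 : HasFDerivAt (fun b : Fin d → ℝ => b i)
          (ContinuousLinearMap.proj (R := ℝ) (φ := fun _ : Fin d => ℝ) i) a :=
        (ContinuousLinearMap.proj (R := ℝ) (φ := fun _ : Fin d => ℝ) i).hasFDerivAt
      rw [pd, h4.fderiv]
      rfl
    rw [Matrix.of_apply, h1, h2, h3]
    simp [Matrix.one_apply, Pi.single_apply, eq_comm]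
  have hgval : ∀ s : ℝ, Matrix.det (Matrix.of (M s)) = Real.exp (∫ x in (0:ℝ)..s, φ x) := by
    intro s
    have h := hconst s
    rw [hM0, Matrix.det_one, intervalIntegral.integral_same, neg_zero, Real.exp_zero,
      one_mul, Real.exp_neg, mul_inv_eq_one₀ (Real.exp_ne_zero _)] at h
    exact h
  -- conclusion
  have hmat : (Matrix.of fun i j => pd (fun b => X b t i) a j) = Matrix.of (M t) := by
    ext i j
    exact hpdX t i j
  refine ⟨?_, ?_, ?_⟩
  · rw [hmat]
    exact hgval t
  · rw [hmat, hgval t]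
    exact Real.exp_pos _
  · intro hdiv
    rw [hmat, hgval t]
    have : ∀ s : ℝ, φ s = 0 := fun s => by
      rw [hφdef]; exact hdiv (X a s) s
    simp [this]
end
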